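/- The translation f mapping connexive formulas into positive intuitionistic formulas preserves and reflects provability: a sequent Γ ⇒ γ is provable in sC if and only if the translated sequent f(Γ) ⇒ f(γ) is provable in LJ⁺ (the positive fragment of Gentzen's LJ). -/

import Mathlib

inductive Fm : Type
  | var : ℕ → Fm
  | conj : Fm → Fm → Fm
  | disj : Fm → Fm → Fm
  | impl : Fm → Fm → Fm
  | neg : Fm → Fm
  deriving DecidableEq

open Fm

/-- Optional rules: cut, (ex-middle), (Peirce), (g-ex-middle), (at-ex-middle). -/
structure Rules where
  cut : Bool := false
  exMid : Bool := false
  peirce : Bool := false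
  gem : Bool := false
  atEx : Bool := false

/-- The sequent calculus sC for Wansing's connexive logic C, with optional extra rules. -/
inductive SC (R : Rules) : Finset Fm → Fm → Prop
  | init1 (p : ℕ) (Γ : Finset Fm) : SC R (insert (var p) Γ) (var p)
  | init2 (p : ℕ) (Γ : Finset Fm) : SC R (insert (neg (var p)) Γ) (neg (var p))
  | cut {Γ Δ : Finset Fm} {a c : Fm} : R.cut = true →
      SC R Γ a → SC R (insert a Δ) c → SC R (Γ ∪ Δ) c
  | implL {Γ Δ : Finset Fm} {a b c : Fm} :
      SC R Γ a → SC R (insert b Δ) c → SC R (insert (impl a b) (Γ ∪ Δ)) c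
  | implR {Γ : Finset Fm} {a b : Fm} :
      SC R (insert a Γ) b → SC R Γ (impl a b)
  | conjL {Γ : Finset Fm} {a b c : Fm} :
      SC R (insert a (insert b Γ)) c → SC R (insert (conj a b) Γ) c
  | conjR {Γ : Finset Fm} {a b : Fm} :
      SC R Γ a → SC R Γ b → SC R Γ (conj a b)
  | disjL {Γ : Finset Fm} {a b c : Fm} :
      SC R (insert a Γ) c → SC R (insert b Γ) c → SC R (insert (disj a b) Γ) c
  | disjR1 {Γ : Finset Fm} {a b : Fm} : SC R Γ a → SC R Γ (disj a b)
  | disjR2 {Γ : Finset Fm} {a b : Fm} : SC R Γ b → SC R Γ (disj a b)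
  | negnegL {Γ : Finset Fm} {a c : Fm} :
      SC R (insert a Γ) c → SC R (insert (neg (neg a)) Γ) c
  | negnegR {Γ : Finset Fm} {a : Fm} : SC R Γ a → SC R Γ (neg (neg a))
  | negimplL {Γ Δ : Finset Fm} {a b c : Fm} :
      SC R Γ a → SC R (insert (neg b) Δ) c → SC R (insert (neg (impl a b)) (Γ ∪ Δ)) c
  | negimplR {Γ : Finset Fm} {a b : Fm} :
      SC R (insert a Γ) (neg b) → SC R Γ (neg (impl a b))
  | negconjL {Γ : Finset Fm} {a b c : Fm} :
      SC R (insert (neg a) Γ) c → SC R (insert (neg b) Γ) c →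
      SC R (insert (neg (conj a b)) Γ) c
  | negconjR1 {Γ : Finset Fm} {a b : Fm} : SC R Γ (neg a) → SC R Γ (neg (conj a b))
  | negconjR2 {Γ : Finset Fm} {a b : Fm} : SC R Γ (neg b) → SC R Γ (neg (conj a b))
  | negdisjL {Γ : Finset Fm} {a b c : Fm} :
      SC R (insert (neg a) (insert (neg b) Γ)) c → SC R (insert (neg (disj a b)) Γ) c
  | negdisjR {Γ : Finset Fm} {a b : Fm} :
      SC R Γ (neg a) → SC R Γ (neg b) → SC R Γ (neg (disj a b))
  | exMid {Γ : Finset Fm} {a c : Fm} : R.exMid = true →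
      SC R (insert (neg a) Γ) c → SC R (insert a Γ) c → SC R Γ c
  | peirce {Γ : Finset Fm} {a b : Fm} : R.peirce = true →
      SC R (insert (impl a b) Γ) a → SC R Γ a
  | gem {Γ : Finset Fm} {a b c : Fm} : R.gem = true →
      SC R (insert (impl a b) Γ) c → SC R (insert a Γ) c → SC R Γ c
  | atEx {Γ : Finset Fm} {p : ℕ} {c : Fm} : R.atEx = true →
      SC R (insert (neg (var p)) Γ) c → SC R (insert (var p) Γ) c → SC R Γ c

/-- sC (with cut). -/
def sC : Rules := { cut := true }
/-- cut-free sC. -/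
def sCcf : Rules := {}
/-- sC3 = sC + (ex-middle). -/
def sC3 : Rules := { cut := true, exMid := true }
/-- sMC = sC + (Peirce). -/
def sMC : Rules := { cut := true, peirce := true }
/-- sMC* = sC + (g-ex-middle). -/
def sMCstar : Rules := { cut := true, gem := true }

/-- Positive intuitionistic formulas over Φ ∪ Φ' (pos p = p ∈ Φ, ppos p = p' ∈ Φ'). -/
inductive PFm : Type
  | pos : ℕ → PFm
  | ppos : ℕ → PFm
  | conj : PFm → PFm → PFm
  | disj : PFm → PFm → PFm
  | impl : PFm → PFm → PFm
  deriving DecidableEq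

mutual
/-- The translation f from the connexive language into the positive language. -/
def fpos : Fm → PFm
  | .var p => .pos p
  | .conj a b => .conj (fpos a) (fpos b)
  | .disj a b => .disj (fpos a) (fpos b)
  | .impl a b => .impl (fpos a) (fpos b)
  | .neg a => fneg a
/-- f(∼α). -/
def fneg : Fm → PFm
  | .var p => .ppos p
  | .conj a b => .disj (fneg a) (fneg b)
  | .disj a b => .conj (fneg a) (fneg b)
  | .impl a b => .impl (fpos a) (fneg b)
  | .neg a => fpos a
end

/-- Optional rules for the positive calculus. -/
structure PRules where
  cut : Bool := false
  peirce : Bool := false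

/-- LJ⁺: single-succedent positive intuitionistic sequent calculus, optional cut/Peirce. -/
inductive LJ (R : PRules) : Finset PFm → PFm → Prop
  | init1 (p : ℕ) (Γ : Finset PFm) : LJ R (insert (.pos p) Γ) (.pos p)
  | init2 (p : ℕ) (Γ : Finset PFm) : LJ R (insert (.ppos p) Γ) (.ppos p)
  | cut {Γ Δ : Finset PFm} {a c : PFm} : R.cut = true →
      LJ R Γ a → LJ R (insert a Δ) c → LJ R (Γ ∪ Δ) c
  | implL {Γ Δ : Finset PFm} {a b c : PFm} :
      LJ R Γ a → LJ R (insert b Δ) c → LJ R (insert (.impl a b) (Γ ∪ Δ)) c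
  | implR {Γ : Finset PFm} {a b : PFm} :
      LJ R (insert a Γ) b → LJ R Γ (.impl a b)
  | conjL {Γ : Finset PFm} {a b c : PFm} :
      LJ R (insert a (insert b Γ)) c → LJ R (insert (.conj a b) Γ) c
  | conjR {Γ : Finset PFm} {a b : PFm} :
      LJ R Γ a → LJ R Γ b → LJ R Γ (.conj a b)
  | disjL {Γ : Finset PFm} {a b c : PFm} :
      LJ R (insert a Γ) c → LJ R (insert b Γ) c → LJ R (insert (.disj a b) Γ) c
  | disjR1 {Γ : Finset PFm} {a b : PFm} : LJ R Γ a → LJ R Γ (.disj a b)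
  | disjR2 {Γ : Finset PFm} {a b : PFm} : LJ R Γ b → LJ R Γ (.disj a b)
  | peirce {Γ : Finset PFm} {a b : PFm} : R.peirce = true →
      LJ R (insert (.impl a b) Γ) a → LJ R Γ a

/-!
Derivations translate rule by rule in both directions: `f` sends every sC rule to an LJ⁺ rule
(a rule for `∼` becomes the rule for the connective into which `f` pushes the negation), and the
back-translation `p' ↦ ∼p` sends every LJ⁺ rule to an sC rule. For reflection it remains to see
that, already without cut, `α` is interderivable with the back-translation of `f(α)` and `∼α` with
that of `f(∼α)`; cuts then replace the back-translated sequent by the original one.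
-/

def PFm.toFm : PFm → Fm
  | .pos p => .var p
  | .ppos p => .neg (.var p)
  | .conj a b => .conj a.toFm b.toFm
  | .disj a b => .disj a.toFm b.toFm
  | .impl a b => .impl a.toFm b.toFm

theorem SC.map_fpos {c p : Bool} {Γ : Finset Fm} {γ : Fm}
    (h : SC { cut := c, peirce := p } Γ γ) :
    LJ { cut := c, peirce := p } (Γ.image fpos) (fpos γ) := by
  induction h <;> simp only [Finset.image_insert, Finset.image_union, fpos, fneg] at *
  case init1 => exact LJ.init1 _ _
  case init2 => exact LJ.init2 _ _
  case cut hcut _ _ ih₁ ih₂ => exact LJ.cut hcut ih₁ ih₂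
  case implL ih₁ ih₂ | negimplL ih₁ ih₂ => exact LJ.implL ih₁ ih₂
  case implR ih | negimplR ih => exact LJ.implR ih
  case conjL ih | negdisjL ih => exact LJ.conjL ih
  case conjR ih₁ ih₂ | negdisjR ih₁ ih₂ => exact LJ.conjR ih₁ ih₂
  case disjL ih₁ ih₂ | negconjL ih₁ ih₂ => exact LJ.disjL ih₁ ih₂
  case disjR1 ih | negconjR1 ih => exact LJ.disjR1 ih
  case disjR2 ih | negconjR2 ih => exact LJ.disjR2 ih
  case negnegL ih | negnegR ih => exact ih
  case peirce hpeirce _ ih => exact LJ.peirce hpeirce ih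
  case exMid h _ _ _ _ | gem h _ _ _ _ | atEx h _ _ _ _ => cases h

theorem LJ.map_toFm {R : PRules} {Δ : Finset PFm} {δ : PFm} (h : LJ R Δ δ) :
    SC { cut := R.cut, peirce := R.peirce } (Δ.image PFm.toFm) δ.toFm := by
  induction h <;> simp only [Finset.image_insert, Finset.image_union, PFm.toFm] at *
  case init1 => exact SC.init1 _ _
  case init2 => exact SC.init2 _ _
  case cut hcut _ _ ih₁ ih₂ => exact SC.cut hcut ih₁ ih₂
  case implL ih₁ ih₂ => exact SC.implL ih₁ ih₂
  case implR ih => exact SC.implR ih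
  case conjL ih => exact SC.conjL ih
  case conjR ih₁ ih₂ => exact SC.conjR ih₁ ih₂
  case disjL ih₁ ih₂ => exact SC.disjL ih₁ ih₂
  case disjR1 ih => exact SC.disjR1 ih
  case disjR2 ih => exact SC.disjR2 ih
  case peirce hpeirce _ ih => exact SC.peirce hpeirce ih

def Interderivable (R : Rules) (a b : Fm) : Prop :=
  (∀ Γ, SC R (insert a Γ) b) ∧ (∀ Γ, SC R (insert b Γ) a)

namespace SC

variable {R : Rules}

theorem implL_of_same {Γ : Finset Fm} {a b c : Fm} (ha : SC R Γ a)
    (hb : SC R (insert b Γ) c) : SC R (insert (impl a b) Γ) c := by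
  simpa only [Finset.union_self] using implL ha hb

theorem negimplL_of_same {Γ : Finset Fm} {a b c : Fm} (ha : SC R Γ a)
    (hb : SC R (insert (neg b) Γ) c) : SC R (insert (neg (impl a b)) Γ) c := by
  simpa only [Finset.union_self] using negimplL ha hb

theorem interderivable_toFm_fpos (α : Fm) :
    Interderivable R α (fpos α).toFm ∧ Interderivable R (neg α) (fneg α).toFm := by
  induction α with
  | var p => exact ⟨⟨init1 p, init1 p⟩, ⟨init2 p, init2 p⟩⟩
  | conj a b iha ihb =>
    obtain ⟨⟨a₁, a₂⟩, ⟨a₃, a₄⟩⟩ := iha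
    obtain ⟨⟨b₁, b₂⟩, ⟨b₃, b₄⟩⟩ := ihb
    refine ⟨⟨fun Γ => ?_, fun Γ => ?_⟩, ⟨fun Γ => ?_, fun Γ => ?_⟩⟩
    · exact conjL (conjR (a₁ _) (Finset.insert_comm _ _ Γ ▸ b₁ _))
    · exact conjL (conjR (a₂ _) (Finset.insert_comm _ _ Γ ▸ b₂ _))
    · exact negconjL (disjR1 (a₃ _)) (disjR2 (b₃ _))
    · exact disjL (negconjR1 (a₄ _)) (negconjR2 (b₄ _))
  | disj a b iha ihb =>
    obtain ⟨⟨a₁, a₂⟩, ⟨a₃, a₄⟩⟩ := iha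
    obtain ⟨⟨b₁, b₂⟩, ⟨b₃, b₄⟩⟩ := ihb
    refine ⟨⟨fun Γ => ?_, fun Γ => ?_⟩, ⟨fun Γ => ?_, fun Γ => ?_⟩⟩
    · exact disjL (disjR1 (a₁ _)) (disjR2 (b₁ _))
    · exact disjL (disjR1 (a₂ _)) (disjR2 (b₂ _))
    · exact negdisjL (conjR (a₃ _) (Finset.insert_comm _ _ Γ ▸ b₃ _))
    · exact conjL (negdisjR (a₄ _) (Finset.insert_comm _ _ Γ ▸ b₄ _))
  | impl a b iha ihb =>
    obtain ⟨⟨a₁, a₂⟩, ⟨a₃, a₄⟩⟩ := iha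
    obtain ⟨⟨b₁, b₂⟩, ⟨b₃, b₄⟩⟩ := ihb
    refine ⟨⟨fun Γ => implR ?_, fun Γ => implR ?_⟩, ⟨fun Γ => implR ?_, fun Γ => negimplR ?_⟩⟩
      <;> rw [Finset.insert_comm]
    · exact implL_of_same (a₂ _) (b₁ _)
    · exact implL_of_same (a₁ _) (b₂ _)
    · exact negimplL_of_same (a₂ _) (b₃ _)
    · exact implL_of_same (a₁ _) (b₄ _)
  | neg a iha =>
    obtain ⟨⟨a₁, a₂⟩, ⟨a₃, a₄⟩⟩ := iha
    exact ⟨⟨a₃, a₄⟩, ⟨fun Γ => negnegL (a₁ Γ), fun Γ => negnegR (a₂ Γ)⟩⟩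

theorem of_image_union (hcut : R.cut = true) {φ : Fm → Fm} {Γ : Finset Fm}
    (hφ : ∀ a ∈ Γ, SC R {a} (φ a)) {Δ : Finset Fm} {c : Fm}
    (h : SC R (Γ.image φ ∪ Δ) c) : SC R (Γ ∪ Δ) c := by
  induction Γ using Finset.induction_on generalizing Δ with
  | empty => simpa using h
  | @insert a Γ _ ih =>
    have ha : SC R ({a} ∪ (Γ.image φ ∪ Δ)) c :=
      cut hcut (hφ a (Finset.mem_insert_self a Γ))
        (by simpa only [Finset.image_insert, Finset.insert_union] using h)
    rw [← Finset.insert_eq, ← Finset.union_insert] at ha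
    rw [Finset.insert_union, ← Finset.union_insert]
    exact ih (fun b hb => hφ b (Finset.mem_insert_of_mem hb)) ha

end SC

/-- the translation f preserves and reflects provability between sC and LJ⁺. -/
theorem stmt6 (Γ : Finset Fm) (γ : Fm) :
    SC sC Γ γ ↔ LJ { cut := true } (Γ.image fpos) (fpos γ) := by
  refine ⟨SC.map_fpos, fun h => ?_⟩
  have hround : SC sC (Γ.image (PFm.toFm ∘ fpos)) (fpos γ).toFm := by
    rw [← Finset.image_image]
    exact LJ.map_toFm h
  have hcontext : SC sC (Γ.image (PFm.toFm ∘ fpos) ∪ Γ) γ :=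
    SC.cut rfl hround ((SC.interderivable_toFm_fpos γ).1.2 Γ)
  simpa only [Finset.union_self] using SC.of_image_union rfl (fun a _ => (SC.interderivable_toFm_fpos a).1.1 ∅) hcontext
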